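/- For every x ∈ cs^λ, the partial sums of the expansion with respect to the basis sequences converge to x in the norm ‖·‖_{bs^λ}: writing x^[M] = ∑_{n=0}^M Λ_n(x)·e_λ^(n), one has ‖x − x^[M]‖_{bs^λ} → 0 as M → ∞; the same holds for every x ∈ cs₀^λ. -/

import Mathlib

open Filter Topology

/-- `dl l k = λ_k - λ_{k-1}` with the convention `λ_{-1} = 0`. -/
noncomputable def dl (l : ℕ → ℝ) (k : ℕ) : ℝ := l k - (if k = 0 then 0 else l (k - 1))

/-- `LamT l x n = Λ_n(x) = (1/λ_n) ∑_{k=0}^n (λ_k - λ_{k-1}) x_k`. -/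
noncomputable def LamT (l : ℕ → ℝ) (x : ℕ → ℂ) (n : ℕ) : ℂ :=
  (1 / (l n : ℂ)) * ∑ k ∈ Finset.range (n + 1), ((dl l k : ℝ) : ℂ) * x k

/-- `cs^λ`: the partial sums `∑_{n=0}^m Λ_n(x)` converge. -/
def csLam (l : ℕ → ℝ) : Set (ℕ → ℂ) :=
  {x | ∃ L, Tendsto (fun m => ∑ n ∈ Finset.range (m + 1), LamT l x n) atTop (𝓝 L)}

/-- `cs₀^λ`: the partial sums `∑_{n=0}^m Λ_n(x)` tend to `0`. -/
def cs0Lam (l : ℕ → ℝ) : Set (ℕ → ℂ) :=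
  {x | Tendsto (fun m => ∑ n ∈ Finset.range (m + 1), LamT l x n) atTop (𝓝 0)}

/-- `bs^λ`: the partial sums `∑_{n=0}^m Λ_n(x)` are bounded. -/
def bsLam (l : ℕ → ℝ) : Set (ℕ → ℂ) :=
  {x | ∃ C, ∀ m, ‖∑ n ∈ Finset.range (m + 1), LamT l x n‖ ≤ C}

/-- The norm `‖x‖_{bs^λ} = sup_m |∑_{n=0}^m Λ_n(x)|`. -/
noncomputable def bsLamNorm (l : ℕ → ℝ) (x : ℕ → ℂ) : ℝ :=
  ⨆ m, ‖∑ n ∈ Finset.range (m + 1), LamT l x n‖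

/-- The basis sequence `e_λ^(n)`:
`(e_λ^(n))_k = (-1)^{k-n} λ_n/(λ_k - λ_{k-1})` if `n ≤ k ≤ n+1`, and `0` otherwise. -/
noncomputable def eLam (l : ℕ → ℝ) (n : ℕ) (k : ℕ) : ℂ :=
  if n ≤ k ∧ k ≤ n + 1 then (-1 : ℂ) ^ (k - n) * (l n : ℂ) / ((dl l k : ℝ) : ℂ) else 0

/-!
Since `(λ_k - λ_{k-1}) e_λ^(j)_k` is `λ_j` at `k = j`, `-λ_j` at `k = j + 1` and `0` otherwise, the
sum defining `Λ_n(e_λ^(j))` telescopes and `Λ_n(e_λ^(j)) = δ_{nj}`.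
By linearity of `Λ_n`, the remainder `x - x^[M]` has `Λ_n(x - x^[M]) = Λ_n(x)` for `n > M` and `0`
otherwise; hence its `m`-th partial sum is `S_m - S_M` (or `0` for `m ≤ M`), where `S_m` are the partial
sums of `Λ(x)`. For `x ∈ cs^λ` (in particular `x ∈ cs₀^λ`) the sequence `S` is Cauchy, which makes the
supremum small uniformly in `m`.
-/

lemma StrictMono.dl_pos {l : ℕ → ℝ} (hmono : StrictMono l) (hpos : 0 < l 0) (k : ℕ) :
    0 < dl l k := by
  cases k with
  | zero => simpa [dl] using hpos
  | succ k => simpa [dl] using hmono k.lt_succ_self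

noncomputable def LamTₗ (l : ℕ → ℝ) (n : ℕ) : (ℕ → ℂ) →ₗ[ℂ] ℂ where
  toFun x := LamT l x n
  map_add' x y := by
    simp only [LamT, Pi.add_apply, mul_add, Finset.sum_add_distrib]
  map_smul' c x := by
    simp only [LamT, Pi.smul_apply, smul_eq_mul, RingHom.id_apply, Finset.mul_sum]
    exact Finset.sum_congr rfl fun _ _ => by ring

@[simp] lemma LamTₗ_apply (l : ℕ → ℝ) (n : ℕ) (x : ℕ → ℂ) : LamTₗ l n x = LamT l x n := rfl

lemma dl_mul_eLam {l : ℕ → ℝ} (hdl : ∀ k, dl l k ≠ 0) (j k : ℕ) :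
    (dl l k : ℂ) * eLam l j k =
      (if k = j then (l j : ℂ) else 0) - (if k = j + 1 then (l j : ℂ) else 0) := by
  have hdl' : (dl l k : ℂ) ≠ 0 := by exact_mod_cast hdl k
  unfold eLam
  rcases eq_or_ne k j with rfl | hkj
  · simp [mul_div_cancel₀ _ hdl']
  rcases eq_or_ne k (j + 1) with rfl | hkj'
  · simp [mul_div_cancel₀ _ hdl']
  · simp [hkj, hkj', show ¬(j ≤ k ∧ k ≤ j + 1) by omega]

lemma LamT_eLam {l : ℕ → ℝ} (hl : ∀ n, l n ≠ 0) (hdl : ∀ k, dl l k ≠ 0) (j n : ℕ) :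
    LamT l (eLam l j) n = if n = j then 1 else 0 := by
  simp only [LamT, dl_mul_eLam hdl, Finset.sum_sub_distrib, Finset.sum_ite_eq',
    Finset.mem_range]
  have hln : (l n : ℂ) ≠ 0 := by exact_mod_cast hl n
  rcases lt_trichotomy n j with h | rfl | h
  · simp [show ¬ j ≤ n by omega, show ¬ j < n by omega, h.ne]
  · simp [hln]
  · simp [(by omega : j < n + 1), (by omega : j + 1 < n + 1), h.ne']

lemma LamT_sub_expansion {l : ℕ → ℝ} (hl : ∀ n, l n ≠ 0) (hdl : ∀ k, dl l k ≠ 0)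
    (x : ℕ → ℂ) (M n : ℕ) :
    LamT l (fun k => x k - ∑ j ∈ Finset.range (M + 1), LamT l x j * eLam l j k) n =
      if M < n then LamT l x n else 0 := by
  have hfun : (fun k => x k - ∑ j ∈ Finset.range (M + 1), LamT l x j * eLam l j k) =
      x - ∑ j ∈ Finset.range (M + 1), LamT l x j • eLam l j := by
    ext k
    simp [Finset.sum_apply]
  change LamTₗ l n _ = _
  rw [hfun, map_sub, map_sum]
  simp only [map_smul, LamTₗ_apply, LamT_eLam hl hdl, smul_eq_mul, mul_ite, mul_one, mul_zero,
    Finset.sum_ite_eq, Finset.mem_range]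
  split_ifs <;> first | omega | simp

lemma sum_range_ite_lt {G : Type*} [AddCommGroup G] (f : ℕ → G) (M m : ℕ) :
    ∑ n ∈ Finset.range (m + 1), (if M < n then f n else 0) =
      ∑ n ∈ Finset.range (m + 1), f n - ∑ n ∈ Finset.range (min m M + 1), f n := by
  have hfilter : (Finset.range (m + 1)).filter (fun n => ¬ M < n) = Finset.range (min m M + 1) := by
    ext n
    simp only [Finset.mem_filter, Finset.mem_range]
    omega
  rw [← Finset.sum_filter, eq_sub_iff_add_eq, ← hfilter,
    Finset.sum_filter_add_sum_filter_not]

lemma tendsto_bsLamNorm_sub_expansion {l : ℕ → ℝ} (hl : ∀ n, l n ≠ 0) (hdl : ∀ k, dl l k ≠ 0)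
    {x : ℕ → ℂ} (hx : CauchySeq fun m => ∑ n ∈ Finset.range (m + 1), LamT l x n) :
    Tendsto (fun M => bsLamNorm l
      (fun k => x k - ∑ n ∈ Finset.range (M + 1), LamT l x n * eLam l n k)) atTop (𝓝 0) := by
  set S : ℕ → ℂ := fun m => ∑ n ∈ Finset.range (m + 1), LamT l x n
  have hpartial : ∀ M m, ∑ n ∈ Finset.range (m + 1),
      LamT l (fun k => x k - ∑ j ∈ Finset.range (M + 1), LamT l x j * eLam l j k) n =
        S m - S (min m M) := by
    intro M m
    simp only [LamT_sub_expansion hl hdl, sum_range_ite_lt, S]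
  rw [Metric.tendsto_atTop]
  intro ε hε
  obtain ⟨N, hN⟩ := Metric.cauchySeq_iff.mp hx (ε / 2) (half_pos hε)
  refine ⟨N, fun M hM => ?_⟩
  have hle : bsLamNorm l
      (fun k => x k - ∑ n ∈ Finset.range (M + 1), LamT l x n * eLam l n k) ≤ ε / 2 := by
    refine ciSup_le fun m => ?_
    rw [hpartial]
    rcases le_total m M with h | h
    · rw [min_eq_left h, sub_self, norm_zero]
      positivity
    · rw [min_eq_right h, ← dist_eq_norm]
      exact (hN m (hM.trans h) M hM).le
  have hnonneg : 0 ≤ bsLamNorm l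
      (fun k => x k - ∑ n ∈ Finset.range (M + 1), LamT l x n * eLam l n k) :=
    Real.iSup_nonneg fun _ => norm_nonneg _
  rw [Real.dist_eq, sub_zero, abs_of_nonneg hnonneg]
  linarith

theorem stmt9_general (l : ℕ → ℝ) (hmono : StrictMono l) (hpos : 0 < l 0) :
    (∀ x ∈ csLam l,
      Tendsto (fun M => bsLamNorm l
        (fun k => x k - ∑ n ∈ Finset.range (M + 1), LamT l x n * eLam l n k)) atTop (𝓝 0)) ∧
    (∀ x ∈ cs0Lam l,
      Tendsto (fun M => bsLamNorm l
        (fun k => x k - ∑ n ∈ Finset.range (M + 1), LamT l x n * eLam l n k)) atTop (𝓝 0)) := by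
  have hl : ∀ n, l n ≠ 0 := fun n => (hpos.trans_le (hmono.monotone n.zero_le)).ne'
  have hdl : ∀ k, dl l k ≠ 0 := fun k => (hmono.dl_pos hpos k).ne'
  exact ⟨fun x ⟨_, hL⟩ => tendsto_bsLamNorm_sub_expansion hl hdl hL.cauchySeq,
    fun x hx => tendsto_bsLamNorm_sub_expansion hl hdl hx.cauchySeq⟩

theorem stmt9 (l : ℕ → ℝ) (hmono : StrictMono l) (hpos : 0 < l 0)
    (hlim : Tendsto l atTop atTop) :
    (∀ x ∈ csLam l,
      Tendsto (fun M => bsLamNorm l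
        (fun k => x k - ∑ n ∈ Finset.range (M + 1), LamT l x n * eLam l n k)) atTop (𝓝 0)) ∧
    (∀ x ∈ cs0Lam l,
      Tendsto (fun M => bsLamNorm l
        (fun k => x k - ∑ n ∈ Finset.range (M + 1), LamT l x n * eLam l n k)) atTop (𝓝 0)) :=
  stmt9_general l hmono hpos
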